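/- arXiv:math/0106174 — 4 statements merged into one kernel-verified Lean document; each statement's English description precedes it below -/
import Mathlib

section
/- Let b > a be reals, let (a_n) be a sequence with a_n → a and a_n < b, let (f_n) be continuous functions on [a_n, b] with 0 < c ≤ f_n(x) ≤ C for all n and x, and let (p_n) be polynomials of uniformly bounded degree with p_n(a_n) = 0, p_n'(a_n) = S_n > 0, and all higher derivatives p_n^{(k)}(a_n) ≥ 0 for k ≥ 2. If S_n → ∞, then ∫_{a_n}^{b} f_n(x)/√(p_n(x)) dx → 0. -/
open Filter MeasureTheory

lemma taylor_lower_bound (p : Polynomial ℝ) (r x S : ℝ) (hx : r ≤ x)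
    (hS : 0 ≤ S)
    (h0 : p.eval r = 0) (h1 : (Polynomial.derivative p).eval r = S)
    (hk : ∀ k, 2 ≤ k → 0 ≤ ((Polynomial.derivative)^[k] p).eval r) :
    S * (x - r) ≤ p.eval x := by
  set q := Polynomial.taylor r p with hq
  have hy : 0 ≤ x - r := by linarith
  have hev : p.eval x = q.eval (x - r) := by
    rw [hq, Polynomial.taylor_eval]; ring_nf
  have hn : q.natDegree < max (q.natDegree + 1) 2 := lt_of_lt_of_le (Nat.lt_succ_self _) (le_max_left _ _)
  rw [hev, Polynomial.eval_eq_sum_range' hn]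
  have hcoeff : ∀ i, 2 ≤ i → 0 ≤ q.coeff i := by
    intro i hi
    have h := Polynomial.taylor_coeff r p i
    have h2 := hk i hi
    rw [← congrFun (Polynomial.factorial_smul_hasseDeriv (R := ℝ) i) p,
      LinearMap.smul_apply, Polynomial.eval_smul, nsmul_eq_mul] at h2
    have hipos : (0:ℝ) < i.factorial := by exact_mod_cast i.factorial_pos
    rw [hq, Polynomial.taylor_coeff]
    nlinarith [h2, hipos]
  have hterm : ∀ i ∈ Finset.range (max (q.natDegree + 1) 2), 0 ≤ q.coeff i * (x - r) ^ i := by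
    intro i _
    rcases Nat.lt_or_ge i 2 with h | h
    · interval_cases i
      · simp [hq, Polynomial.taylor_coeff_zero, h0]
      · rw [hq, Polynomial.taylor_coeff_one, h1]
        exact mul_nonneg hS (by simpa using hy)
    · exact mul_nonneg (hcoeff i h) (pow_nonneg hy i)
  have h1mem : 1 ∈ Finset.range (max (q.natDegree + 1) 2) :=
    Finset.mem_range.mpr (lt_of_lt_of_le one_lt_two (le_max_right _ _))
  have := Finset.single_le_sum hterm h1mem
  calc S * (x - r) = q.coeff 1 * (x - r) ^ 1 := by
        rw [hq, Polynomial.taylor_coeff_one, h1, pow_one]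
    _ ≤ _ := this

theorem stmt0 (a b : ℝ) (hab : a < b)
    (aseq : ℕ → ℝ) (haseq : Tendsto aseq atTop (nhds a))
    (haseqb : ∀ n, aseq n < b)
    (f : ℕ → ℝ → ℝ) (c C : ℝ) (hc : 0 < c)
    (hfcont : ∀ n, ContinuousOn (f n) (Set.Icc (aseq n) b))
    (hfbound : ∀ n, ∀ x ∈ Set.Icc (aseq n) b, c ≤ f n x ∧ f n x ≤ C)
    (p : ℕ → Polynomial ℝ) (D : ℕ) (hdeg : ∀ n, (p n).natDegree ≤ D)
    (S : ℕ → ℝ) (hS : ∀ n, 0 < S n)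
    (hp0 : ∀ n, (p n).eval (aseq n) = 0)
    (hp1 : ∀ n, (Polynomial.derivative (p n)).eval (aseq n) = S n)
    (hpk : ∀ n, ∀ k, 2 ≤ k →
      0 ≤ ((Polynomial.derivative)^[k] (p n)).eval (aseq n))
    (hSinf : Tendsto S atTop atTop) :
    Tendsto (fun n => ∫ x in (aseq n)..b, f n x / Real.sqrt ((p n).eval x))
      atTop (nhds 0) := by
  -- C is positive
  have hC : 0 < C := lt_of_lt_of_le hc
    ((hfbound 0 (aseq 0) (Set.mem_Icc.mpr ⟨le_refl _, (haseqb 0).le⟩)).1.trans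
     (hfbound 0 (aseq 0) (Set.mem_Icc.mpr ⟨le_refl _, (haseqb 0).le⟩)).2)
  -- key polynomial lower bound
  have key : ∀ n, ∀ x ∈ Set.Icc (aseq n) b, S n * (x - aseq n) ≤ (p n).eval x := by
    intro n x hx
    exact taylor_lower_bound (p n) (aseq n) x (S n) hx.1 (hS n).le (hp0 n) (hp1 n) (hpk n)
  -- bounding function
  set h : ℕ → ℝ → ℝ := fun n x => (C / Real.sqrt (S n)) * (x - aseq n) ^ (-(1/2) : ℝ) with hh
  -- pointwise bound on Icc
  have hbound : ∀ n, ∀ x ∈ Set.Icc (aseq n) b,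
      f n x / Real.sqrt ((p n).eval x) ≤ h n x := by
    intro n x hx
    rcases eq_or_lt_of_le hx.1 with heq | hlt
    · rw [← heq, hp0 n]
      simp [hh, Real.zero_rpow (by norm_num : (-(1/2):ℝ) ≠ 0)]
    · have hxpos : 0 < x - aseq n := by linarith
      have hp_ge : S n * (x - aseq n) ≤ (p n).eval x := key n x hx
      have hppos : 0 < (p n).eval x := lt_of_lt_of_le (mul_pos (hS n) hxpos) hp_ge
      have hsq : Real.sqrt (S n * (x - aseq n)) ≤ Real.sqrt ((p n).eval x) :=
        Real.sqrt_le_sqrt hp_ge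
      have hsqpos : 0 < Real.sqrt (S n * (x - aseq n)) :=
        Real.sqrt_pos.mpr (mul_pos (hS n) hxpos)
      have h1 : f n x / Real.sqrt ((p n).eval x) ≤ C / Real.sqrt (S n * (x - aseq n)) :=
        div_le_div₀ (hC.le) (hfbound n x hx).2 hsqpos hsq
      refine h1.trans_eq ?_
      rw [Real.sqrt_mul (hS n).le, hh]
      have : (x - aseq n) ^ (-(1/2) : ℝ) = (Real.sqrt (x - aseq n))⁻¹ := by
        rw [Real.rpow_neg hxpos.le, Real.sqrt_eq_rpow]
      simp only [this]
      field_simp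
  -- nonnegativity
  have hnonneg : ∀ n, ∀ x ∈ Set.Icc (aseq n) b,
      0 ≤ f n x / Real.sqrt ((p n).eval x) := by
    intro n x hx
    exact div_nonneg (hc.le.trans (hfbound n x hx).1) (Real.sqrt_nonneg _)
  -- integrability of h
  have hint : ∀ n, IntervalIntegrable (h n) volume (aseq n) b := by
    intro n
    apply IntervalIntegrable.const_mul
    have := (intervalIntegral.intervalIntegrable_rpow'
      (a := 0) (b := b - aseq n) (r := -(1/2)) (by norm_num)).comp_sub_right (aseq n)
    simpa using this
  -- integrability of g
  have gint : ∀ n, IntervalIntegrable (fun x => f n x / Real.sqrt ((p n).eval x))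
      volume (aseq n) b := by
    intro n
    rw [intervalIntegrable_iff_integrableOn_Ioc_of_le (haseqb n).le]
    have hmeas : AEStronglyMeasurable (fun x => f n x / Real.sqrt ((p n).eval x))
        (volume.restrict (Set.Ioc (aseq n) b)) := by
      apply ContinuousOn.aestronglyMeasurable _ measurableSet_Ioc
      apply ContinuousOn.div
      · exact (hfcont n).mono Set.Ioc_subset_Icc_self
      · exact (Real.continuous_sqrt.comp (p n).continuous).continuousOn
      · intro x hx
        have hx' : x ∈ Set.Icc (aseq n) b := Set.Ioc_subset_Icc_self hx
        have hxpos : 0 < x - aseq n := by linarith [hx.1]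
        have hppos : 0 < (p n).eval x :=
          lt_of_lt_of_le (mul_pos (hS n) hxpos) (key n x hx')
        exact (Real.sqrt_pos.mpr hppos).ne'
    have hinth : IntegrableOn (h n) (Set.Ioc (aseq n) b) volume := by
      rw [← intervalIntegrable_iff_integrableOn_Ioc_of_le (haseqb n).le]
      exact hint n
    apply Integrable.mono hinth hmeas
    filter_upwards [ae_restrict_mem measurableSet_Ioc] with x hx
    have hx' : x ∈ Set.Icc (aseq n) b := Set.Ioc_subset_Icc_self hx
    rw [Real.norm_of_nonneg (hnonneg n x hx')]
    exact le_trans (hbound n x hx') (le_abs_self _)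
  -- value of ∫ h
  have hval : ∀ n, ∫ x in (aseq n)..b, h n x
      = (C / Real.sqrt (S n)) * (2 * Real.sqrt (b - aseq n)) := by
    intro n
    rw [hh]
    rw [intervalIntegral.integral_const_mul]
    congr 1
    have : ∫ x in (aseq n)..b, (x - aseq n) ^ (-(1/2) : ℝ)
        = ∫ x in (0:ℝ)..(b - aseq n), x ^ (-(1/2) : ℝ) := by
      rw [intervalIntegral.integral_comp_sub_right (fun x => x ^ (-(1/2):ℝ)) (aseq n)]
      norm_num
    rw [this, integral_rpow (Or.inl (by norm_num))]
    have hba : (0:ℝ) ≤ b - aseq n := by linarith [haseqb n]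
    rw [Real.sqrt_eq_rpow]
    norm_num
    ring
  -- squeeze
  apply squeeze_zero
  · intro n
    exact intervalIntegral.integral_nonneg (haseqb n).le (hnonneg n)
  · intro n
    calc (∫ x in (aseq n)..b, f n x / Real.sqrt ((p n).eval x))
        ≤ ∫ x in (aseq n)..b, h n x :=
          intervalIntegral.integral_mono_on (haseqb n).le (gint n) (hint n) (hbound n)
      _ = (C / Real.sqrt (S n)) * (2 * Real.sqrt (b - aseq n)) := hval n
  · have h1 : Tendsto (fun n => C / Real.sqrt (S n)) atTop (nhds 0) := by
      have hinv : Tendsto (fun n => (S n)⁻¹) atTop (nhds 0) := hSinf.inv_tendsto_atTop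
      have := (Real.continuous_sqrt.tendsto 0).comp hinv
      simp only [Function.comp, Real.sqrt_zero, Real.sqrt_inv] at this
      have := this.const_mul C
      simpa [div_eq_mul_inv] using this
    have h2 : Tendsto (fun n => 2 * Real.sqrt (b - aseq n)) atTop
        (nhds (2 * Real.sqrt (b - a))) := by
      have : Tendsto (fun n => b - aseq n) atTop (nhds (b - a)) :=
        tendsto_const_nhds.sub haseq
      exact ((Real.continuous_sqrt.tendsto _).comp this).const_mul 2
    have := h1.mul h2
    simpa using this
end

section
/- Let b > a be reals, let (a_n) be a sequence with a_n → a and a_n < b, let (f_n) be continuous functions on [a_n, b] with 0 < c ≤ f_n(x) ≤ C, and let (p_n) be polynomials of uniformly bounded degree with p_n(a_n) = 0, p_n'(a_n) = S_n > 0, p_n^{(k)}(a_n) ≥ 0 for k ≥ 2. If S_n → 0 and for each k ≥ 2 the values p_n^{(k)}(a_n) are bounded above uniformly in n, then ∫_{a_n}^{b} f_n(x)/√(p_n(x)) dx → ∞. -/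
/-!
Write `t = x - aₙ`. Taylor expansion at `aₙ`, with nonnegative and uniformly bounded higher
derivatives, gives `Sₙ t ≤ pₙ(x) ≤ Sₙ t + M t²` on `[aₙ, b]` with `M` independent of `n`.
The lower bound makes the integrand `O(t^(-1/2))`, hence integrable; on `t ≥ Sₙ / M` the upper
bound gives `pₙ(x) ≤ 2 M t²`, so for a fixed `ℓ ≤ b - aₙ` the integral is at least
`c / √(2M) · log (M ℓ / Sₙ)`, which tends to infinity as `Sₙ → 0`.
-/

open Filter MeasureTheory

namespace Polynomial

open Finset

section CommSemiring

variable {R : Type*} [CommSemiring R]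

theorem eval_eq_coeff_zero_add_coeff_one_mul_add_sq_mul_sum {q : R[X]} {D : ℕ}
    (hq : q.natDegree ≤ D) (t : R) :
    q.eval t = q.coeff 0 + q.coeff 1 * t
      + t ^ 2 * ∑ i ∈ range D, q.coeff (i + 2) * t ^ i := by
  have hsum : ∑ i ∈ range D, q.coeff (i + 2) * t ^ (i + 2)
      = t ^ 2 * ∑ i ∈ range D, q.coeff (i + 2) * t ^ i := by
    rw [mul_sum]
    exact sum_congr rfl fun i _ => by ring
  rw [eval_eq_sum_range' (n := D + 2) (by omega), sum_range_succ', sum_range_succ', hsum]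
  ring

theorem iterate_derivative_eval_eq_factorial_mul_taylor_coeff (p : R[X]) (r : R) (k : ℕ) :
    (derivative^[k] p).eval r = k.factorial * (taylor r p).coeff k := by
  rw [taylor_coeff, ← factorial_smul_hasseDeriv]
  simp [nsmul_eq_mul]

end CommSemiring

section CommRing

variable {R : Type*} [CommRing R]

theorem eval_eq_add_sq_mul_sum_taylor_coeff {p : R[X]} {D : ℕ}
    (hp : p.natDegree ≤ D) (r x : R) :
    p.eval x = p.eval r + (derivative p).eval r * (x - r)
      + (x - r) ^ 2 * ∑ i ∈ range D, (taylor r p).coeff (i + 2) * (x - r) ^ i := by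
  rw [← taylor_eval_sub r p x,
    eval_eq_coeff_zero_add_coeff_one_mul_add_sq_mul_sum ((natDegree_taylor p r).trans_le hp),
    taylor_coeff_zero, taylor_coeff_one]

end CommRing

section OrderedCommRing

variable {R : Type*} [CommRing R] [LinearOrder R] [IsStrictOrderedRing R]

theorem taylor_coeff_mem_Icc {p : R[X]} {r : R} {k : ℕ} (h : 0 ≤ (derivative^[k] p).eval r) :
    (taylor r p).coeff k ∈ Set.Icc 0 ((derivative^[k] p).eval r) := by
  have hk : (1 : R) ≤ k.factorial := by exact_mod_cast k.factorial_pos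
  rw [iterate_derivative_eval_eq_factorial_mul_taylor_coeff] at h ⊢
  constructor <;> nlinarith

theorem eval_add_derivative_mul_le_eval {p : R[X]} {r x : R} (hx : r ≤ x)
    (h : ∀ k, 2 ≤ k → 0 ≤ (derivative^[k] p).eval r) :
    p.eval r + (derivative p).eval r * (x - r) ≤ p.eval x := by
  rw [eval_eq_add_sq_mul_sum_taylor_coeff le_rfl r x, le_add_iff_nonneg_right]
  have ht : 0 ≤ x - r := sub_nonneg.2 hx
  refine mul_nonneg (sq_nonneg _) (sum_nonneg fun i _ => mul_nonneg ?_ (pow_nonneg ht i))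
  exact (taylor_coeff_mem_Icc (h (i + 2) (by omega))).1

theorem eval_le_add_derivative_mul_add_sq_mul {p : R[X]} {D : ℕ} (hp : p.natDegree ≤ D)
    {r x L : R} {B : ℕ → R} (h0 : ∀ k, 2 ≤ k → 0 ≤ (derivative^[k] p).eval r)
    (hB : ∀ k, 2 ≤ k → (derivative^[k] p).eval r ≤ B k) (hx : r ≤ x) (hxL : x - r ≤ L) :
    p.eval x ≤ p.eval r + (derivative p).eval r * (x - r)
      + (∑ i ∈ range D, B (i + 2) * L ^ i) * (x - r) ^ 2 := by
  rw [eval_eq_add_sq_mul_sum_taylor_coeff hp r x, mul_comm (_ ^ 2), add_le_add_iff_left]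
  have ht : 0 ≤ x - r := sub_nonneg.2 hx
  refine mul_le_mul_of_nonneg_right (sum_le_sum fun i _ => ?_) (sq_nonneg _)
  obtain ⟨hc0, hcB⟩ := taylor_coeff_mem_Icc (h0 (i + 2) (by omega))
  calc (taylor r p).coeff (i + 2) * (x - r) ^ i
      ≤ (taylor r p).coeff (i + 2) * L ^ i := by gcongr
    _ ≤ B (i + 2) * L ^ i := by
      gcongr
      · exact pow_nonneg (ht.trans hxL) i
      · exact hcB.trans (hB _ (by omega))

theorem exists_pos_forall_eval_le_add_derivative_mul_add_sq_mul (p : ℕ → R[X])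
    (r : ℕ → R) {D : ℕ} (hdeg : ∀ n, (p n).natDegree ≤ D)
    (h0 : ∀ n, ∀ k, 2 ≤ k → 0 ≤ (derivative^[k] (p n)).eval (r n))
    (hbdd : ∀ k, 2 ≤ k → ∃ B : R, ∀ n, (derivative^[k] (p n)).eval (r n) ≤ B) (L : R) :
    ∃ M > 0, ∀ n x, r n ≤ x → x - r n ≤ L →
      (p n).eval x ≤ (p n).eval (r n) + (derivative (p n)).eval (r n) * (x - r n)
        + M * (x - r n) ^ 2 := by
  choose! B hB using hbdd
  refine ⟨max (∑ i ∈ range D, B (i + 2) * L ^ i) 1, by positivity, fun n x hx hxL => ?_⟩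
  have h := eval_le_add_derivative_mul_add_sq_mul (hdeg n) (h0 n) (fun k hk => hB k hk n) hx hxL
  exact h.trans (by gcongr; exact le_max_left _ _)

end OrderedCommRing

end Polynomial

open Set Real intervalIntegral

theorem intervalIntegrable_div_sqrt_of_mul_sub_le {f P : ℝ → ℝ} {r b C S : ℝ} (hrb : r ≤ b)
    (hS : 0 < S) (hf : ContinuousOn f (Icc r b)) (hP : ContinuousOn P (Icc r b))
    (hfC : ∀ x ∈ Icc r b, |f x| ≤ C) (hPS : ∀ x ∈ Icc r b, S * (x - r) ≤ P x) :
    IntervalIntegrable (fun x => f x / √(P x)) volume r b := by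
  rw [intervalIntegrable_iff_integrableOn_Ioc_of_le hrb]
  have hC : 0 ≤ C := (abs_nonneg _).trans (hfC r ⟨le_rfl, hrb⟩)
  have hsqrt_pos : ∀ x ∈ Ioc r b, 0 < √(S * (x - r)) := fun x hx =>
    sqrt_pos.2 (mul_pos hS (sub_pos.2 hx.1))
  have hdom : IntegrableOn (fun x => C / √S * (x - r) ^ (-(1 / 2) : ℝ)) (Ioc r b) := by
    rw [← intervalIntegrable_iff_integrableOn_Ioc_of_le hrb]
    simpa using ((intervalIntegrable_rpow' (a := 0) (b := b - r)
      (by norm_num : (-1 : ℝ) < -(1 / 2))).comp_sub_right r).const_mul (C / √S)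
  have hcont : ContinuousOn (fun x => f x / √(P x)) (Ioc r b) :=
    (hf.mono Ioc_subset_Icc_self).div (hP.mono Ioc_subset_Icc_self).sqrt fun x hx =>
      ((hsqrt_pos x hx).trans_le (sqrt_le_sqrt (hPS x (Ioc_subset_Icc_self hx)))).ne'
  refine hdom.mono' (hcont.aestronglyMeasurable measurableSet_Ioc)
    ((ae_restrict_iff' measurableSet_Ioc).2 (Eventually.of_forall fun x hx => ?_))
  have hx' : x ∈ Icc r b := Ioc_subset_Icc_self hx
  calc ‖f x / √(P x)‖ = |f x| / √(P x) := by
        rw [norm_eq_abs, abs_div, abs_of_nonneg (sqrt_nonneg _)]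
    _ ≤ C / √(S * (x - r)) :=
        div_le_div₀ hC (hfC x hx') (hsqrt_pos x hx) (sqrt_le_sqrt (hPS x hx'))
    _ = C / √S * (x - r) ^ (-(1 / 2) : ℝ) := by
      rw [rpow_neg (sub_pos.2 hx.1).le, ← sqrt_eq_rpow, sqrt_mul hS.le, div_mul_eq_div_div,
        div_eq_mul_inv (C / √S)]

theorem mul_log_le_integral_div_sqrt {f P : ℝ → ℝ} {r b c C S M ℓ : ℝ} (hc : 0 < c)
    (hS : 0 < S) (hM : 0 < M) (hf : ContinuousOn f (Icc r b)) (hP : ContinuousOn P (Icc r b))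
    (hfcC : ∀ x ∈ Icc r b, c ≤ f x ∧ f x ≤ C)
    (hPS : ∀ x ∈ Icc r b, S * (x - r) ≤ P x)
    (hPM : ∀ x ∈ Icc r b, P x ≤ S * (x - r) + M * (x - r) ^ 2)
    (hSℓ : S / M ≤ ℓ) (hℓ : ℓ ≤ b - r) :
    c / √(2 * M) * log (M * ℓ / S) ≤ ∫ x in r..b, f x / √(P x) := by
  have hSM : 0 < S / M := div_pos hS hM
  have hsub : Icc (r + S / M) (r + ℓ) ⊆ Icc r b := Icc_subset_Icc (by linarith) (by linarith)
  have hPpos : ∀ x ∈ Icc (r + S / M) (r + ℓ), 0 < P x := fun x hx =>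
    (mul_pos hS (by linarith [hx.1])).trans_le (hPS x (hsub hx))
  have hpoint : ∀ x ∈ Icc (r + S / M) (r + ℓ), c / √(2 * M) * (x - r)⁻¹ ≤ f x / √(P x) := by
    intro x hx
    have ht : S / M ≤ x - r := by linarith [hx.1]
    have hP2M : P x ≤ 2 * M * (x - r) ^ 2 := by
      nlinarith [hPM x (hsub hx), (div_le_iff₀ hM).1 ht]
    calc c / √(2 * M) * (x - r)⁻¹ = c / √(2 * M * (x - r) ^ 2) := by
          rw [sqrt_mul (by positivity) ((x - r) ^ 2), sqrt_sq (hSM.trans_le ht).le,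
            div_mul_eq_div_div, div_eq_mul_inv (c / _)]
      _ ≤ f x / √(P x) :=
        div_le_div₀ (hc.le.trans (hfcC x (hsub hx)).1) (hfcC x (hsub hx)).1
          (sqrt_pos.2 (hPpos x hx)) (sqrt_le_sqrt hP2M)
  have hcont : ContinuousOn (fun x => f x / √(P x)) (Icc (r + S / M) (r + ℓ)) :=
    (hf.mono hsub).div (hP.mono hsub).sqrt fun x hx => (sqrt_pos.2 (hPpos x hx)).ne'
  have hinv : ContinuousOn (fun x => c / √(2 * M) * (x - r)⁻¹) (Icc (r + S / M) (r + ℓ)) :=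
    continuousOn_const.mul ((continuous_sub_right r).continuousOn.inv₀ fun x hx =>
      (hSM.trans_le (le_sub_iff_add_le'.2 hx.1)).ne')
  have hint : IntervalIntegrable (fun x => f x / √(P x)) volume r b := by
    refine intervalIntegrable_div_sqrt_of_mul_sub_le (C := C) (by linarith) hS hf hP
      (fun x hx => ?_) hPS
    obtain ⟨hcf, hfC⟩ := hfcC x hx
    exact abs_le.2 ⟨by linarith, hfC⟩
  calc c / √(2 * M) * log (M * ℓ / S)
      = ∫ x in (r + S / M)..(r + ℓ), c / √(2 * M) * (x - r)⁻¹ := by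
        rw [intervalIntegral.integral_const_mul, integral_comp_sub_right (fun x => x⁻¹),
          add_sub_cancel_left, add_sub_cancel_left, integral_inv_of_pos hSM (hSM.trans_le hSℓ),
          div_div_eq_mul_div, mul_comm ℓ]
    _ ≤ ∫ x in (r + S / M)..(r + ℓ), f x / √(P x) :=
        integral_mono_on (by linarith) (hinv.intervalIntegrable_of_Icc (by linarith))
          (hcont.intervalIntegrable_of_Icc (by linarith)) hpoint
    _ ≤ ∫ x in r..b, f x / √(P x) := by
        refine integral_mono_interval (by linarith) (by linarith) (by linarith) ?_ hint
        refine (ae_restrict_iff' measurableSet_Ioc).2 (Eventually.of_forall fun x hx => ?_)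
        exact div_nonneg (hc.le.trans (hfcC x (Ioc_subset_Icc_self hx)).1) (sqrt_nonneg _)

theorem stmt1_general (a b : ℝ) (hab : a < b)
    (aseq : ℕ → ℝ) (haseq : Tendsto aseq atTop (nhds a))
    (f : ℕ → ℝ → ℝ) (c C : ℝ) (hc : 0 < c)
    (hfcont : ∀ n, ContinuousOn (f n) (Set.Icc (aseq n) b))
    (hfbound : ∀ n, ∀ x ∈ Set.Icc (aseq n) b, c ≤ f n x ∧ f n x ≤ C)
    (p : ℕ → Polynomial ℝ) (D : ℕ) (hdeg : ∀ n, (p n).natDegree ≤ D)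
    (S : ℕ → ℝ) (hS : ∀ n, 0 < S n)
    (hp0 : ∀ n, (p n).eval (aseq n) = 0)
    (hp1 : ∀ n, (Polynomial.derivative (p n)).eval (aseq n) = S n)
    (hpk : ∀ n, ∀ k, 2 ≤ k →
      0 ≤ ((Polynomial.derivative)^[k] (p n)).eval (aseq n))
    (hS0 : Tendsto S atTop (nhds 0))
    (hpkbound : ∀ k, 2 ≤ k → ∃ M : ℝ, ∀ n,
      ((Polynomial.derivative)^[k] (p n)).eval (aseq n) ≤ M) :
    Tendsto (fun n => ∫ x in (aseq n)..b, f n x / Real.sqrt ((p n).eval x))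
      atTop atTop := by
  obtain ⟨A, hA⟩ := haseq.bddBelow_range
  obtain ⟨M, hM, hpM⟩ := Polynomial.exists_pos_forall_eval_le_add_derivative_mul_add_sq_mul
    p aseq hdeg hpk hpkbound (b - A)
  have hlower : ∀ n, ∀ x ∈ Icc (aseq n) b, S n * (x - aseq n) ≤ (p n).eval x :=
    fun n x hx => by
      simpa [hp0, hp1] using Polynomial.eval_add_derivative_mul_le_eval hx.1 (hpk n)
  have hupper : ∀ n, ∀ x ∈ Icc (aseq n) b,
      (p n).eval x ≤ S n * (x - aseq n) + M * (x - aseq n) ^ 2 := fun n x hx => by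
    simpa [hp0, hp1] using hpM n x hx.1 (by linarith [hx.2, hA (mem_range_self n)])
  obtain ⟨ℓ, hℓ, haℓb⟩ : ∃ ℓ, 0 < ℓ ∧ a + ℓ < b := ⟨(b - a) / 2, by linarith, by linarith⟩
  have hSℓ : ∀ᶠ n in atTop, S n / M < ℓ :=
    (hS0.div_const M).eventually_lt_const (by rwa [zero_div])
  have hℓb : ∀ᶠ n in atTop, aseq n < b - ℓ := haseq.eventually_lt_const (by linarith)
  have hSinv : Tendsto (fun n => M * ℓ / S n) atTop atTop := by
    simp only [div_eq_mul_inv]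
    exact (tendsto_inv_nhdsGT_zero.comp (tendsto_nhdsWithin_of_tendsto_nhds_of_eventually_within _
      hS0 (Eventually.of_forall hS))).const_mul_atTop (by positivity)
  refine tendsto_atTop_mono' atTop ?_
    ((tendsto_log_atTop.comp hSinv).const_mul_atTop (by positivity : 0 < c / √(2 * M)))
  filter_upwards [hSℓ, hℓb] with n hn hn'
  exact mul_log_le_integral_div_sqrt hc (hS n) hM (hfcont n) (p n).continuous.continuousOn
    (hfbound n) (hlower n) (hupper n) hn.le (by linarith)

theorem stmt1 (a b : ℝ) (hab : a < b)
    (aseq : ℕ → ℝ) (haseq : Tendsto aseq atTop (nhds a))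
    (haseqb : ∀ n, aseq n < b)
    (f : ℕ → ℝ → ℝ) (c C : ℝ) (hc : 0 < c)
    (hfcont : ∀ n, ContinuousOn (f n) (Set.Icc (aseq n) b))
    (hfbound : ∀ n, ∀ x ∈ Set.Icc (aseq n) b, c ≤ f n x ∧ f n x ≤ C)
    (p : ℕ → Polynomial ℝ) (D : ℕ) (hdeg : ∀ n, (p n).natDegree ≤ D)
    (S : ℕ → ℝ) (hS : ∀ n, 0 < S n)
    (hp0 : ∀ n, (p n).eval (aseq n) = 0)
    (hp1 : ∀ n, (Polynomial.derivative (p n)).eval (aseq n) = S n)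
    (hpk : ∀ n, ∀ k, 2 ≤ k →
      0 ≤ ((Polynomial.derivative)^[k] (p n)).eval (aseq n))
    (hS0 : Tendsto S atTop (nhds 0))
    (hpkbound : ∀ k, 2 ≤ k → ∃ M : ℝ, ∀ n,
      ((Polynomial.derivative)^[k] (p n)).eval (aseq n) ≤ M) :
    Tendsto (fun n => ∫ x in (aseq n)..b, f n x / Real.sqrt ((p n).eval x))
      atTop atTop :=
  stmt1_general a b hab aseq haseq f c C hc hfcont hfbound p D hdeg S hS hp0 hp1 hpk hS0 hpkbound
end

section
/- Let f : [a,b] × (c,d) → ℝ be continuous with f(x, S) < 0 for all x when S ≥ 1/δ and f(x, S) > 0 for all x when S ≤ δ (for some 0 < δ < 1/δ < ∞ with [δ, 1/δ] ⊂ (c,d)). Then there exists a connected subset 𝒞 of the zero set of f in [a,b] × (δ, 1/δ) meeting both {a} × (δ, 1/δ) and {b} × (δ, 1/δ). -/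
/-!
Let `B` be the component of `{f ≤ 0}` in the rectangle containing the top edge, and `C` the
component of the complement of `B` containing the bottom edge. A point of the frontier of `C`
where `f ≠ 0` would have a connected neighbourhood lying either in `C` or in `B`, so the frontier
consists of zeros of `f`; it meets every vertical segment, which joins `C` to `B`. It is connected
because the rectangle is unicoherent: `closure C` and `Cᶜ` are closed connected sets covering it,
and in a simply connected space such sets meet in a connected set. Indeed, a separation
`A ∩ B = F ∪ G` yields a Urysohn function `u` (`0` on `F`, `1` on `G`) such that `u` on `A` and
`-u` on `B` glue to a circle-valued map; a real lift `θ` of it makes `θ - u` constant on `A` and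
`θ + u` constant on `B`, which is impossible since they agree on `F` and differ by `2` on `G`.
-/

open Set

section Topology

variable {X : Type*} [TopologicalSpace X]

theorem IsPreconnected.inter_frontier_nonempty {s t : Set X} (hs : IsPreconnected s)
    (hst : (s ∩ t).Nonempty) (hst' : (s \ t).Nonempty) : (s ∩ frontier t).Nonempty := by
  by_contra! h
  have hcover : s ⊆ interior t ∪ (closure t)ᶜ := fun x hx => by
    by_cases hxt : x ∈ closure t
    · exact .inl (by_contra fun hxi => (h.subset ⟨hx, hxt, hxi⟩ : x ∈ (∅ : Set X)))
    · exact .inr hxt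
  obtain ⟨x, hxs, hxt⟩ := hst
  obtain ⟨y, hys, hyt⟩ := hst'
  have hx : x ∈ interior t := (hcover hxs).resolve_right (not_not.2 (subset_closure hxt))
  have hy : y ∈ (closure t)ᶜ := (hcover hys).resolve_left fun hyi => hyt (interior_subset hyi)
  obtain ⟨z, -, hzi, hzc⟩ := hs _ _ isOpen_interior isClosed_closure.isOpen_compl hcover
    ⟨x, hxs, hx⟩ ⟨y, hys, hy⟩
  exact hzc (subset_closure (interior_subset hzi))

theorem IsPreconnected.subset_connectedComponentIn_of_mem {s F : Set X} {x y : X}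
    (hs : IsPreconnected s) (hy : y ∈ s ∩ _root_.connectedComponentIn F x) (hsF : s ⊆ F) :
    s ⊆ _root_.connectedComponentIn F x :=
  connectedComponentIn_eq hy.2 ▸ hs.subset_connectedComponentIn hy.1 hsF

theorem IsClosed.connectedComponentIn {F : Set X} (hF : IsClosed F) (x : X) :
    IsClosed (connectedComponentIn F x) := by
  by_cases hx : x ∈ F
  · exact isClosed_of_closure_subset <|
      isPreconnected_connectedComponentIn.closure.subset_connectedComponentIn
        (subset_closure (mem_connectedComponentIn hx))
        (hF.closure_subset_iff.2 (connectedComponentIn_subset F x))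
  · rw [connectedComponentIn_eq_empty hx]
    exact isClosed_empty

theorem isPreconnected_compl_connectedComponentIn_compl [ConnectedSpace X]
    [LocallyConnectedSpace X] {B : Set X} (hBc : IsClosed B) (hB : IsPreconnected B)
    (hBne : B.Nonempty) (x : X) : IsPreconnected (connectedComponentIn Bᶜ x)ᶜ := by
  set C := connectedComponentIn Bᶜ x
  have hCo : IsOpen C := hBc.isOpen_compl.connectedComponentIn
  have hBC : B ⊆ Cᶜ := fun b hb hbC => connectedComponentIn_subset _ _ hbC hb
  obtain ⟨b₀, hb₀⟩ := hBne
  refine isPreconnected_of_forall b₀ fun y hy => ?_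
  by_cases hyB : y ∈ B
  · exact ⟨B, hBC, hb₀, hyB, hB⟩
  set D := connectedComponentIn Bᶜ y
  have hyD : y ∈ D := mem_connectedComponentIn hyB
  have hDC : Disjoint D C := by
    refine disjoint_left.2 fun z hzD hzC => hy ?_
    have hCD : C = D := (connectedComponentIn_eq hzC).trans (connectedComponentIn_eq hzD).symm
    exact hCD ▸ hyD
  have hclD : closure D ⊆ Cᶜ := fun z hz hzC => by
    obtain ⟨w, hwC, hwD⟩ := mem_closure_iff.1 hz C hCo hzC
    exact disjoint_left.1 hDC hwD hwC
  -- `D` is open, so if its closure missed `B` it would be clopen, hence all of `X`.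
  have hDB : (closure D ∩ B).Nonempty := by
    by_contra! h
    have hDcl : IsClosed D := isClosed_of_closure_subset <|
      isPreconnected_connectedComponentIn.closure.subset_connectedComponentIn
        (subset_closure hyD) fun z hz hzB => h.subset ⟨hz, hzB⟩
    have hD : D = univ :=
      (isClopen_iff.1 ⟨hDcl, hBc.isOpen_compl.connectedComponentIn⟩).resolve_left
        (nonempty_of_mem hyD).ne_empty
    exact connectedComponentIn_subset Bᶜ y (hD ▸ mem_univ b₀ : b₀ ∈ D) hb₀
  exact ⟨closure D ∪ B, union_subset hclD hBC, .inr hb₀, .inl (subset_closure hyD),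
    isPreconnected_connectedComponentIn.closure.union' hDB hB⟩

theorem exists_continuous_sub_mem_zmultiples_add_mem_zmultiples [SimplyConnectedSpace X]
    [LocallyPathConnectedSpace X] {A B : Set X} (hAc : IsClosed A) (hBc : IsClosed B)
    (hAB : A ∪ B = univ) (u : C(X, ℝ)) (hu : ∀ x ∈ A ∩ B, u x = 0 ∨ u x = 1) :
    ∃ θ : C(X, ℝ), (∀ x ∈ A, θ x - u x ∈ AddSubgroup.zmultiples (2 : ℝ)) ∧
      ∀ x ∈ B, θ x + u x ∈ AddSubgroup.zmultiples (2 : ℝ) := by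
  classical
  have hglue : ∀ x ∈ A ∩ B, ((u x : ℝ) : AddCircle (2 : ℝ)) = ((-u x : ℝ) : AddCircle (2 : ℝ)) :=
    fun x hx => by
      rcases hu x hx with h | h
      · simp [h]
      · exact QuotientAddGroup.eq.2 (by norm_num [h])
  let φ : X → AddCircle (2 : ℝ) :=
    A.piecewise (fun x => (u x : AddCircle (2 : ℝ))) (fun x => ((-u x : ℝ) : AddCircle (2 : ℝ)))
  have hφA : ∀ x ∈ A, φ x = u x := fun x hx => piecewise_eq_of_mem _ _ _ hx
  have hφB : ∀ x ∈ B, φ x = ((-u x : ℝ) : AddCircle (2 : ℝ)) := fun x hx => by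
    by_cases hxA : x ∈ A
    · exact (hφA x hxA).trans (hglue x ⟨hxA, hx⟩)
    · exact piecewise_eq_of_notMem _ _ _ hxA
  have hφ : Continuous φ := by
    refine Continuous.piecewise (fun x hx => hglue x ⟨hAc.frontier_subset hx, ?_⟩)
      (by fun_prop) (by fun_prop)
    have : closure Aᶜ ⊆ B :=
      closure_minimal (fun y hy => (hAB.ge (mem_univ y)).resolve_left hy) hBc
    exact this (frontier_subset_closure (by rwa [frontier_compl]))
  obtain ⟨θ₀, hθ₀⟩ := QuotientAddGroup.mk_surjective (φ (Classical.arbitrary X))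
  obtain ⟨θ, ⟨-, hθ⟩, -⟩ :=
    (AddCircle.isCoveringMap_coe (2 : ℝ)).existsUnique_continuousMap_lifts ⟨φ, hφ⟩ _ θ₀ hθ₀
  have hθφ : ∀ x, (θ x : AddCircle (2 : ℝ)) = φ x := fun x => congrFun hθ x
  refine ⟨θ, fun x hx => QuotientAddGroup.eq_iff_sub_mem.1 ((hθφ x).trans (hφA x hx)),
    fun x hx => ?_⟩
  simpa using QuotientAddGroup.eq_iff_sub_mem.1 ((hθφ x).trans (hφB x hx))

theorem IsPreconnected.inter_of_union_eq_univ [NormalSpace X] [SimplyConnectedSpace X]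
    [LocallyPathConnectedSpace X] {A B : Set X} (hAc : IsClosed A) (hBc : IsClosed B)
    (hA : IsPreconnected A) (hB : IsPreconnected B) (hAB : A ∪ B = univ) :
    IsPreconnected (A ∩ B) := by
  rw [isPreconnected_closed_iff]
  intro F G hF hG hcover ⟨p, hpAB, hpF⟩ ⟨q, hqAB, hqG⟩
  by_contra! hdisj
  obtain ⟨u, hu0, hu1, -⟩ := exists_continuous_zero_one_of_isClosed
    ((hAc.inter hBc).inter hF) ((hAc.inter hBc).inter hG) <| disjoint_left.2
      fun x hxF hxG => (hdisj.subset ⟨hxF.1, hxF.2, hxG.2⟩ : x ∈ (∅ : Set X))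
  obtain ⟨θ, hθA, hθB⟩ := exists_continuous_sub_mem_zmultiples_add_mem_zmultiples hAc hBc hAB u
    fun x hx => (hcover hx).imp (fun h => hu0 ⟨hx, h⟩) (fun h => hu1 ⟨hx, h⟩)
  have hdisc : IsDiscrete (AddSubgroup.zmultiples (2 : ℝ) : Set ℝ) :=
    isDiscrete_iff_discreteTopology.2 <|
      inferInstanceAs (DiscreteTopology (AddSubgroup.zmultiples (2 : ℝ)))
  have hA' : θ q - u q = θ p - u p :=
    hA.constant_of_mapsTo hdisc (f := fun x => θ x - u x) (by fun_prop) hθA hqAB.1 hpAB.1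
  have hB' : θ q + u q = θ p + u p :=
    hB.constant_of_mapsTo hdisc (f := fun x => θ x + u x) (by fun_prop) hθB hqAB.2 hpAB.2
  have hp : u p = 0 := hu0 ⟨hpAB, hpF⟩
  have hq : u q = 1 := hu1 ⟨hqAB, hqG⟩
  linarith

theorem isPreconnected_frontier_connectedComponentIn_compl [NormalSpace X]
    [SimplyConnectedSpace X] [LocallyPathConnectedSpace X] {B : Set X} (hBc : IsClosed B)
    (hB : IsPreconnected B) (hBne : B.Nonempty) (x : X) :
    IsPreconnected (frontier (connectedComponentIn Bᶜ x)) := by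
  have hCo : IsOpen (connectedComponentIn Bᶜ x) := hBc.isOpen_compl.connectedComponentIn
  rw [hCo.frontier_eq, sdiff_eq]
  exact isPreconnected_connectedComponentIn.closure.inter_of_union_eq_univ isClosed_closure
    hCo.isClosed_compl (isPreconnected_compl_connectedComponentIn_compl hBc hB hBne x)
    (eq_univ_of_forall fun y => (em _).imp (fun h => subset_closure h) id)

theorem frontier_connectedComponentIn_compl_connectedComponentIn_subset
    [LocallyConnectedSpace X] {g : X → ℝ} (hg : Continuous g) (y x : X) :
    frontier (connectedComponentIn (connectedComponentIn {z | g z ≤ 0} y)ᶜ x) ⊆ g ⁻¹' {0} := by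
  set B := connectedComponentIn {z | g z ≤ 0} y
  set C := connectedComponentIn Bᶜ x
  intro p hp
  have hmeet : ∀ V, IsOpen V → p ∈ V → (V ∩ C).Nonempty := fun V hVo hpV =>
    mem_closure_iff.1 hp.1 V hVo hpV
  have hmeetB : ∀ V, IsOpen V → IsPreconnected V → p ∈ V → (V ∩ B).Nonempty := by
    intro V hVo hV hpV
    by_contra! hVB'
    obtain ⟨w, hwV, hwC⟩ := hmeet V hVo hpV
    exact hp.2 (mem_interior.2 ⟨V, hV.subset_connectedComponentIn_of_mem ⟨hwV, hwC⟩
      fun z hzV hzB => hVB'.subset ⟨hzV, hzB⟩, hVo, hpV⟩)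
  rcases lt_trichotomy (g p) 0 with hneg | hzero | hpos
  · set V := connectedComponentIn (g ⁻¹' Iio 0) p
    have hVo : IsOpen V := (isOpen_Iio.preimage hg).connectedComponentIn
    have hpV : p ∈ V := mem_connectedComponentIn hneg
    have hVB : V ⊆ B := isPreconnected_connectedComponentIn.subset_connectedComponentIn_of_mem
      (hmeetB V hVo isPreconnected_connectedComponentIn hpV).some_mem
      fun z hz => mem_ofPred.2 (connectedComponentIn_subset (g ⁻¹' Iio 0) p hz : g z < 0).le
    obtain ⟨w, hwV, hwC⟩ := hmeet V hVo hpV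
    exact absurd (hVB hwV) (connectedComponentIn_subset _ _ hwC)
  · exact hzero
  · set V := connectedComponentIn (g ⁻¹' Ioi 0) p
    have hVo : IsOpen V := (isOpen_Ioi.preimage hg).connectedComponentIn
    obtain ⟨z, hzV, hzB⟩ := hmeetB V hVo isPreconnected_connectedComponentIn
      (mem_connectedComponentIn hpos)
    exact ((connectedComponentIn_subset (g ⁻¹' Ioi 0) p hzV : 0 < g z).not_ge
      (mem_ofPred.1 (connectedComponentIn_subset {z | g z ≤ 0} y hzB))).elim

theorem exists_isPreconnected_subset_zeros_inter_nonempty [NormalSpace X]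
    [SimplyConnectedSpace X] [LocallyPathConnectedSpace X] {g : X → ℝ} (hg : Continuous g)
    {S T : Set X} (hS : IsPreconnected S) (hT : IsPreconnected T) (hSne : S.Nonempty)
    (hTne : T.Nonempty) (hSpos : ∀ x ∈ S, 0 < g x) (hTneg : ∀ x ∈ T, g x < 0) :
    ∃ W : Set X, IsPreconnected W ∧ W ⊆ g ⁻¹' {0} ∧
      ∀ L : Set X, IsPreconnected L → (L ∩ S).Nonempty → (L ∩ T).Nonempty →
        (L ∩ W).Nonempty := by
  obtain ⟨s₀, hs₀⟩ := hSne
  obtain ⟨t₀, ht₀⟩ := hTne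
  set B := connectedComponentIn {x | g x ≤ 0} t₀
  have hTB : T ⊆ B := hT.subset_connectedComponentIn ht₀ fun x hx => (hTneg x hx).le
  set C := connectedComponentIn Bᶜ s₀
  have hSC : S ⊆ C := hS.subset_connectedComponentIn hs₀ fun x hx hxB =>
    (hSpos x hx).not_ge (connectedComponentIn_subset {x | g x ≤ 0} t₀ hxB)
  refine ⟨frontier C, isPreconnected_frontier_connectedComponentIn_compl
    ((isClosed_le hg continuous_const).connectedComponentIn t₀) isPreconnected_connectedComponentIn
    ⟨t₀, hTB ht₀⟩ s₀, frontier_connectedComponentIn_compl_connectedComponentIn_subset hg t₀ s₀,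
    fun L hL ⟨s, hsL, hsS⟩ ⟨t, htL, htT⟩ => hL.inter_frontier_nonempty ⟨s, hsL, hSC hsS⟩
      ⟨t, htL, fun htC => connectedComponentIn_subset _ _ htC (hTB htT)⟩⟩

end Topology

theorem Convex.exists_isPreconnected_subset_zeros_inter_nonempty {E : Type*}
    [NormedAddCommGroup E] [NormedSpace ℝ E] {R : Set E} (hR : Convex ℝ R) {g : E → ℝ}
    (hg : ContinuousOn g R) {S T : Set E} (hSR : S ⊆ R) (hTR : T ⊆ R) (hS : IsPreconnected S)
    (hT : IsPreconnected T) (hSne : S.Nonempty) (hTne : T.Nonempty) (hSpos : ∀ x ∈ S, 0 < g x)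
    (hTneg : ∀ x ∈ T, g x < 0) :
    ∃ W ⊆ R, IsPreconnected W ∧ W ⊆ g ⁻¹' {0} ∧ ∀ L ⊆ R, IsPreconnected L →
      (L ∩ S).Nonempty → (L ∩ T).Nonempty → (L ∩ W).Nonempty := by
  have := hR.contractibleSpace (hSne.mono hSR)
  have := hR.locallyPathConnectedSpace
  have hpre : ∀ s ⊆ R, IsPreconnected s → IsPreconnected (((↑) : R → E) ⁻¹' s) :=
    fun s hsR hs => Topology.IsInducing.subtypeVal.isPreconnected_image.1 <| by
      rwa [Subtype.image_preimage_coe, inter_eq_right.2 hsR]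
  have hlift : ∀ s ⊆ R, s.Nonempty → (((↑) : R → E) ⁻¹' s).Nonempty :=
    fun s hsR ⟨x, hx⟩ => ⟨⟨x, hsR hx⟩, hx⟩
  obtain ⟨W, hW, hW0, hWL⟩ := _root_.exists_isPreconnected_subset_zeros_inter_nonempty
    hg.domRestrict (hpre S hSR hS) (hpre T hTR hT) (hlift S hSR hSne) (hlift T hTR hTne)
    (fun x hx => hSpos x hx) (fun x hx => hTneg x hx)
  refine ⟨(↑) '' W, Subtype.coe_image_subset R W, hW.image _ continuous_subtype_val.continuousOn,
    fun _ ⟨x, hx, hxp⟩ => hxp ▸ hW0 hx, fun L hLR hL hLS hLT => ?_⟩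
  obtain ⟨p, hpL, hpW⟩ := hWL _ (hpre L hLR hL) (hlift _ (inter_subset_left.trans hLR) hLS)
    (hlift _ (inter_subset_left.trans hLR) hLT)
  exact ⟨p, hpL, p, hpW, rfl⟩

theorem stmt16_general (a b c d δ : ℝ) (hab : a < b) (hδ' : δ < 1 / δ)
    (hsub : Set.Icc δ (1 / δ) ⊆ Set.Ioo c d)
    (f : ℝ × ℝ → ℝ)
    (hf : ContinuousOn f (Set.Icc a b ×ˢ Set.Ioo c d))
    (hneg : ∀ x ∈ Set.Icc a b, ∀ S ∈ Set.Ioo c d, 1 / δ ≤ S → f (x, S) < 0)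
    (hpos : ∀ x ∈ Set.Icc a b, ∀ S ∈ Set.Ioo c d, S ≤ δ → f (x, S) > 0) :
    ∃ 𝒞 : Set (ℝ × ℝ),
      𝒞 ⊆ {p ∈ Set.Icc a b ×ˢ Set.Ioo δ (1 / δ) | f p = 0} ∧
      IsConnected 𝒞 ∧
      (𝒞 ∩ {a} ×ˢ Set.Ioo δ (1 / δ)).Nonempty ∧
      (𝒞 ∩ {b} ×ˢ Set.Ioo δ (1 / δ)).Nonempty := by
  have ha : a ∈ Icc a b := left_mem_Icc.2 hab.le
  have hδ₀ : δ ∈ Icc δ (1 / δ) := left_mem_Icc.2 hδ'.le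
  have hδ₁ : 1 / δ ∈ Icc δ (1 / δ) := right_mem_Icc.2 hδ'.le
  set R := Icc a b ×ˢ Icc δ (1 / δ)
  have hposR : ∀ p ∈ R, p.2 ≤ δ → 0 < f p := fun p hp => hpos p.1 hp.1 p.2 (hsub hp.2)
  have hnegR : ∀ p ∈ R, 1 / δ ≤ p.2 → f p < 0 := fun p hp => hneg p.1 hp.1 p.2 (hsub hp.2)
  have hhor : ∀ y ∈ Icc δ (1 / δ), Icc a b ×ˢ {y} ⊆ R := fun y hy =>
    prod_mono subset_rfl (singleton_subset_iff.2 hy)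
  obtain ⟨W, hWR, hW, hW0, hWL⟩ :=
    ((convex_Icc a b).prod (convex_Icc δ (1 / δ))).exists_isPreconnected_subset_zeros_inter_nonempty
      (hf.mono fun p hp => ⟨hp.1, hsub hp.2⟩) (hhor δ hδ₀) (hhor _ hδ₁)
      (isPreconnected_Icc.prod isPreconnected_singleton)
      (isPreconnected_Icc.prod isPreconnected_singleton) ⟨(a, δ), ha, rfl⟩ ⟨(a, 1 / δ), ha, rfl⟩
      (fun p hp => hposR p (hhor δ hδ₀ hp) hp.2.le) (fun p hp => hnegR p (hhor _ hδ₁ hp) hp.2.ge)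
  have hWsub : W ⊆ {p ∈ Icc a b ×ˢ Ioo δ (1 / δ) | f p = 0} := fun p hpW =>
    ⟨⟨(hWR hpW).1, lt_of_not_ge fun h => (hposR p (hWR hpW) h).ne' (hW0 hpW),
      lt_of_not_ge fun h => (hnegR p (hWR hpW) h).ne (hW0 hpW)⟩, hW0 hpW⟩
  have hlat : ∀ x ∈ Icc a b, (W ∩ {x} ×ˢ Ioo δ (1 / δ)).Nonempty := fun x hx => by
    obtain ⟨p, hpL, hpW⟩ := hWL ({x} ×ˢ Icc δ (1 / δ))
      (prod_mono (singleton_subset_iff.2 hx) subset_rfl) (isPreconnected_singleton.prod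
        isPreconnected_Icc) ⟨(x, δ), ⟨rfl, hδ₀⟩, hx, rfl⟩ ⟨(x, 1 / δ), ⟨rfl, hδ₁⟩, hx, rfl⟩
    exact ⟨p, hpW, hpL.1, (hWsub hpW).1.2⟩
  exact ⟨W, hWsub, ⟨(hlat a ha).mono inter_subset_left, hW⟩, hlat a ha,
    hlat b (right_mem_Icc.2 hab.le)⟩

theorem stmt16 (a b c d δ : ℝ) (hab : a < b) (hδ : 0 < δ) (hδ' : δ < 1 / δ)
    (hsub : Set.Icc δ (1 / δ) ⊆ Set.Ioo c d)
    (f : ℝ × ℝ → ℝ)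
    (hf : ContinuousOn f (Set.Icc a b ×ˢ Set.Ioo c d))
    (hneg : ∀ x ∈ Set.Icc a b, ∀ S ∈ Set.Ioo c d, 1 / δ ≤ S → f (x, S) < 0)
    (hpos : ∀ x ∈ Set.Icc a b, ∀ S ∈ Set.Ioo c d, S ≤ δ → f (x, S) > 0) :
    ∃ 𝒞 : Set (ℝ × ℝ),
      𝒞 ⊆ {p ∈ Set.Icc a b ×ˢ Set.Ioo δ (1 / δ) | f p = 0} ∧
      IsConnected 𝒞 ∧
      (𝒞 ∩ {a} ×ˢ Set.Ioo δ (1 / δ)).Nonempty ∧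
      (𝒞 ∩ {b} ×ˢ Set.Ioo δ (1 / δ)).Nonempty :=
  stmt16_general a b c d δ hab hδ' hsub f hf hneg hpos
end

section
/- Fix m > 0 and 2m < r₀ ≤ r₁, and sequences r*_n → 2m⁺ with r*_n < r₀, choices S_n ∈ (δ₁, 1/δ₁) bounded. For the E = 0 Schwarzschild angular integral: Δφ_n = ∫_{r*_n}^{r₀} L_n/√(h_n(r)) dr + ∫_{r*_n}^{r₁} L_n/√(h_n(r)) dr with h_n(r) = r(r−2m) q_n (r² − r*_n²), q_n = 1/(2 r*_n²(r*_n − 2m)), L_n² = q_n r*_n². Then Δφ_n → ∞. -/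
open Filter MeasureTheory

theorem stmt18 (m r₀ r₁ : ℝ) (hm : 0 < m) (h0 : 2 * m < r₀) (h01 : r₀ ≤ r₁)
    (rs : ℕ → ℝ) (hrs1 : ∀ n, 2 * m < rs n) (hrs2 : ∀ n, rs n < r₀)
    (hrslim : Tendsto rs atTop (nhds (2 * m))) :
    Tendsto (fun n =>
      let q : ℝ := 1 / (2 * (rs n) ^ 2 * (rs n - 2 * m))
      let L : ℝ := Real.sqrt q * rs n
      let h : ℝ → ℝ := fun r => r * (r - 2 * m) * q * (r ^ 2 - (rs n) ^ 2)
      (∫ r in (rs n)..r₀, L / Real.sqrt (h r)) +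
      ∫ r in (rs n)..r₁, L / Real.sqrt (h r))
      atTop atTop := by
  have hr₁ : 0 < r₁ := by linarith
  have hc : (0:ℝ) < m / r₁ := div_pos hm hr₁
  set c : ℝ := m / r₁ with hcdef
  -- the lower bound sequence
  have hGlim : Tendsto (fun n => c * Real.log ((r₀ - 2*m) / (rs n - 2*m))) atTop atTop := by
    apply Tendsto.const_mul_atTop hc
    apply Real.tendsto_log_atTop.comp
    have h1 : Tendsto (fun n => rs n - 2*m) atTop (nhdsWithin 0 (Set.Ioi 0)) := by
      apply tendsto_nhdsWithin_of_tendsto_nhds_of_eventually_within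
      · simpa using hrslim.sub_const (2*m)
      · exact Eventually.of_forall fun n => by simp [sub_pos]; exact hrs1 n
    have h2 := (tendsto_inv_nhdsGT_zero.comp h1).const_mul_atTop (by linarith : (0:ℝ) < r₀ - 2*m)
    simpa [div_eq_mul_inv, Function.comp] using h2
  refine tendsto_atTop_mono (fun n => ?_) hGlim
  simp only []
  set s := rs n with hsdef
  have hs1 : 2*m < s := hrs1 n
  have hs2 : s < r₀ := hrs2 n
  have hspos : 0 < s := by linarith
  have hsm : 0 < s - 2*m := by linarith
  have hqpos : (0:ℝ) < 1 / (2 * s^2 * (s - 2*m)) := by positivity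
  -- interior estimate data
  have key : ∀ r ∈ Set.Ioc s r₀,
      0 < r * (r - 2*m) * (r^2 - s^2) ∧
      Real.sqrt (r * (r - 2*m) * (1 / (2 * s^2 * (s - 2*m))) * (r^2 - s^2))
        = Real.sqrt (1 / (2 * s^2 * (s - 2*m))) * Real.sqrt (r * (r - 2*m) * (r^2 - s^2)) := by
    intro r hr
    obtain ⟨hr1, hr2⟩ := hr
    constructor
    · have : 0 < r^2 - s^2 := by nlinarith
      have h1 : 0 < r - 2*m := by linarith
      have h2 : 0 < r := by linarith
      positivity
    · rw [show r * (r - 2*m) * (1 / (2 * s^2 * (s - 2*m))) * (r^2 - s^2)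
          = (1 / (2 * s^2 * (s - 2*m))) * (r * (r - 2*m) * (r^2 - s^2)) by ring,
        Real.sqrt_mul hqpos.le]
  set q : ℝ := 1 / (2 * s^2 * (s - 2*m)) with hqdef
  have hsr0 : s ≤ r₀ := hs2.le
  have hsr1 : s ≤ r₁ := le_trans hsr0 h01
  set f : ℝ → ℝ := fun r => Real.sqrt q * s / Real.sqrt (r * (r - 2*m) * q * (r^2 - s^2)) with hfdef
  set g : ℝ → ℝ := fun r => c * (r - 2*m)⁻¹ with hgdef
  have hfnonneg : ∀ r, 0 ≤ f r := fun r =>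
    div_nonneg (mul_nonneg (Real.sqrt_nonneg _) hspos.le) (Real.sqrt_nonneg _)
  -- second integral nonneg
  have hsecond : 0 ≤ ∫ r in s..r₁, f r :=
    intervalIntegral.integral_nonneg hsr1 (fun u _ => hfnonneg u)
  -- g interval integrable
  have hgint : IntervalIntegrable g volume s r₀ := by
    apply ContinuousOn.intervalIntegrable
    apply continuousOn_const.mul
    apply ContinuousOn.inv₀ (by fun_prop)
    intro x hx
    rw [Set.uIcc_of_le hsr0] at hx
    have := hx.1
    intro hcon
    have : x = 2*m := by linarith [sub_eq_zero.mp hcon]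
    linarith
  -- f interval integrable, via domination
  set D : ℝ := 2 * s^2 * (s - 2*m) with hDdef
  have hDpos : 0 < D := by positivity
  set K : ℝ := s / Real.sqrt D with hKdef
  have hfint : IntervalIntegrable f volume s r₀ := by
    have hbase : IntervalIntegrable (fun x : ℝ => x ^ (-(1/2) : ℝ)) volume 0 (r₀ - s) :=
      intervalIntegral.intervalIntegrable_rpow' (by norm_num)
    have hshift := (hbase.comp_sub_right s).const_mul K
    have hdom : IntervalIntegrable (fun x : ℝ => K * (x - s) ^ (-(1/2) : ℝ)) volume s r₀ := by
      simpa using hshift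
    apply hdom.mono_fun'
    · apply Measurable.aestronglyMeasurable
      apply Measurable.div measurable_const
      fun_prop
    · rw [Set.uIoc_of_le hsr0]
      filter_upwards [ae_restrict_mem measurableSet_Ioc] with r hr
      obtain ⟨hXpos, hsq⟩ := key r hr
      obtain ⟨hr1, hr2⟩ := hr
      have hrs0 : (0:ℝ) < r - s := by linarith
      have hsqX : 0 < Real.sqrt (r * (r - 2*m) * (r^2 - s^2)) := Real.sqrt_pos.mpr hXpos
      have hsqq : 0 < Real.sqrt q := Real.sqrt_pos.mpr hqpos
      have hfr : f r = s / Real.sqrt (r * (r - 2*m) * (r^2 - s^2)) := by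
        rw [hfdef]
        simp only []
        rw [hsq, mul_div_mul_left _ _ (ne_of_gt hsqq)]
      have hXlb : D * (r - s) ≤ r * (r - 2*m) * (r^2 - s^2) := by
        have e0 : s*((s-2*m)*(2*s)) ≤ r*((r-2*m)*(r+s)) := by
          apply mul_le_mul hr1.le ?_ (by positivity) (by linarith)
          apply mul_le_mul (by linarith) (by linarith) (by linarith) (by linarith)
        have e1 : D ≤ r * (r - 2*m) * (r + s) := by
          calc D = s*((s-2*m)*(2*s)) := by rw [hDdef]; ring
          _ ≤ r*((r-2*m)*(r+s)) := e0
          _ = r * (r - 2*m) * (r + s) := by ring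
        have e2 := mul_le_mul_of_nonneg_right e1 hrs0.le
        calc D * (r - s) ≤ r * (r - 2*m) * (r + s) * (r - s) := e2
        _ = r * (r - 2*m) * (r^2 - s^2) := by ring
      have hsqlb : Real.sqrt D * Real.sqrt (r - s) ≤ Real.sqrt (r * (r - 2*m) * (r^2 - s^2)) := by
        rw [← Real.sqrt_mul hDpos.le]
        exact Real.sqrt_le_sqrt hXlb
      have hrpow : (r - s) ^ (-(1/2) : ℝ) = (Real.sqrt (r - s))⁻¹ := by
        rw [Real.rpow_neg hrs0.le, Real.sqrt_eq_rpow]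
      have hDrs : 0 < Real.sqrt D * Real.sqrt (r - s) := by
        apply mul_pos (Real.sqrt_pos.mpr hDpos) (Real.sqrt_pos.mpr hrs0)
      have : f r ≤ K * (r - s) ^ (-(1/2) : ℝ) := by
        rw [hfr, hrpow, hKdef, ← div_eq_mul_inv, div_div]
        gcongr
      simpa [Real.norm_eq_abs, abs_of_nonneg (hfnonneg r)] using this
  -- pointwise bound g ≤ f on Ioc
  have hpt : ∀ r ∈ Set.Ioc s r₀, g r ≤ f r := by
    intro r hr
    obtain ⟨hXpos, hsq⟩ := key r hr
    obtain ⟨hr1, hr2⟩ := hr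
    have hrm : 0 < r - 2*m := by linarith
    have hsqX : 0 < Real.sqrt (r * (r - 2*m) * (r^2 - s^2)) := Real.sqrt_pos.mpr hXpos
    have hsqq : 0 < Real.sqrt q := Real.sqrt_pos.mpr hqpos
    have hfr : f r = s / Real.sqrt (r * (r - 2*m) * (r^2 - s^2)) := by
      rw [hfdef]; simp only []
      rw [hsq, mul_div_mul_left _ _ (ne_of_gt hsqq)]
    have hXub : r * (r - 2*m) * (r^2 - s^2) ≤ (2 * r₁ * (r - 2*m))^2 := by
      have k2 : r * (r-2*m) * ((r-s)*(r+s)) ≤ r₁ * (r-2*m) * ((r-2*m)*(2*r₁)) := by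
        apply mul_le_mul
        · exact mul_le_mul_of_nonneg_right (by linarith) hrm.le
        · exact mul_le_mul (by linarith) (by linarith) (by linarith) (by linarith)
        · exact mul_nonneg (by linarith) (by linarith)
        · exact mul_nonneg (by linarith) (by linarith)
      calc r*(r-2*m)*(r^2-s^2) = r*(r-2*m)*((r-s)*(r+s)) := by ring
        _ ≤ r₁*(r-2*m)*((r-2*m)*(2*r₁)) := k2
        _ ≤ (2*r₁*(r-2*m))^2 := by nlinarith [sq_nonneg (r₁*(r-2*m))]
    have hsqub : Real.sqrt (r * (r - 2*m) * (r^2 - s^2)) ≤ 2 * r₁ * (r - 2*m) := by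
      calc Real.sqrt (r * (r - 2*m) * (r^2 - s^2)) ≤ Real.sqrt ((2 * r₁ * (r - 2*m))^2) :=
        Real.sqrt_le_sqrt hXub
      _ = 2 * r₁ * (r - 2*m) := Real.sqrt_sq (by positivity)
    rw [hfr, hgdef]
    simp only []
    rw [← div_eq_mul_inv, hcdef, div_div]
    calc m / (r₁ * (r - 2*m)) ≤ s / (2 * r₁ * (r - 2*m)) := by
          rw [div_le_div_iff₀ (by positivity) (by positivity)]
          nlinarith
      _ ≤ s / Real.sqrt (r * (r - 2*m) * (r^2 - s^2)) := by gcongr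
  have hmono : (∫ r in s..r₀, g r) ≤ ∫ r in s..r₀, f r := by
    apply intervalIntegral.integral_mono_ae_restrict hsr0 hgint hfint
    have hns : ∀ᵐ x : ℝ, x ≠ s := by
      refine ae_iff.mpr ?_
      simp
    filter_upwards [ae_restrict_mem measurableSet_Icc, ae_restrict_of_ae hns] with r hrIcc hrne
    exact hpt r ⟨lt_of_le_of_ne hrIcc.1 (Ne.symm hrne), hrIcc.2⟩
  have hcomp : (∫ r in s..r₀, g r) = c * Real.log ((r₀ - 2*m)/(s - 2*m)) := by
    rw [hgdef]
    simp only []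
    rw [intervalIntegral.integral_const_mul]
    congr 1
    have h1 : (∫ r in s..r₀, (r - 2*m)⁻¹) = ∫ x in (s - 2*m)..(r₀ - 2*m), x⁻¹ :=
      intervalIntegral.integral_comp_sub_right (fun x => x⁻¹) (2*m)
    rw [h1, integral_inv_of_pos (by linarith) (by linarith)]
  calc c * Real.log ((r₀ - 2*m)/(s - 2*m)) = ∫ r in s..r₀, g r := hcomp.symm
    _ ≤ ∫ r in s..r₀, f r := hmono
    _ ≤ _ := le_add_of_nonneg_right hsecond
end
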